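/- For any positive integer n: sum over k_1 ≥ ... ≥ k_l ≥ n+1 of 1/((2k_1-1)²···(2k_l-1)²), summed over all l ≥ 1, is less than 1/(4n-3). Equivalently, |∏_{k=n+1}^∞ (1 - z²/(2k-1)²)^{-1} - 1| < 1/(4n-3) for any complex z with |z| ≤ 1. -/
import Mathlib


/-- The tail multiple `t`-harmonic star sum `t*_{∞,n+1}({2}^l)`: the sum over weakly
decreasing tuples `k₁ ≥ ⋯ ≥ k_l ≥ n+1` of `1/((2k₁-1)²⋯(2k_l-1)²)`. -/
noncomputable def tTail (n l : ℕ) : ℝ :=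
  ∑' k : {k : Fin l → ℕ // (∀ i j : Fin l, i ≤ j → k j ≤ k i) ∧ ∀ i, n + 1 ≤ k i},
    ∏ i : Fin l, (1 : ℝ) / (2 * (k.1 i : ℝ) - 1) ^ 2

lemma aux_tel (n : ℕ) (hn : 0 < n) : ∀ N, n ≤ N →
    ∑ k ∈ Finset.Icc (n+1) N, (1:ℝ)/(2*(k:ℝ)-1)^2 ≤ 1/(4*(n:ℝ)) - 1/(4*(N:ℝ)) := by
  intro N hN
  induction N, hN using Nat.le_induction with
  | base => simp
  | succ N hN ih =>
    rw [Finset.sum_Icc_succ_top (by omega)]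
    have hN1 : (1:ℝ) ≤ N := by exact_mod_cast le_trans hn hN
    have hterm : (1:ℝ)/(2*((N:ℝ)+1)-1)^2 ≤ 1/(4*(N:ℝ)) - 1/(4*((N:ℝ)+1)) := by
      rw [div_sub_div _ _ (by nlinarith) (by nlinarith),
        div_le_div_iff₀ (by nlinarith) (by positivity)]
      ring_nf
      nlinarith
    push_cast
    linarith

lemma inner_le (n N : ℕ) (hn : 0 < n) :
    ∑ k ∈ Finset.Icc (n+1) N, (1:ℝ)/(2*(k:ℝ)-1)^2 ≤ 1/(4*(n:ℝ)) := by
  rcases le_or_gt n N with h | h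
  · have hN : (0:ℝ) ≤ 1/(4*(N:ℝ)) := by positivity
    linarith [aux_tel n hn N h]
  · rw [Finset.Icc_eq_empty (by omega)]
    simp

lemma tTail_le (n : ℕ) (hn : 0 < n) (l : ℕ) : tTail n l ≤ (1/(4*(n:ℝ)))^l := by
  apply tsum_le_of_sum_le' (by positivity)
  intro s
  set N := s.sup (fun k => Finset.univ.sup k.1) with hNdef
  have hsub : s.image Subtype.val ⊆ Fintype.piFinset (fun _ : Fin l => Finset.Icc (n+1) N) := by
    intro g hg
    simp only [Finset.mem_image] at hg
    obtain ⟨k, hk, rfl⟩ := hg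
    rw [Fintype.mem_piFinset]
    intro i
    rw [Finset.mem_Icc]
    exact ⟨k.2.2 i, le_trans (Finset.le_sup (Finset.mem_univ i))
      (Finset.le_sup (f := fun k => Finset.univ.sup k.1) hk)⟩
  calc ∑ k ∈ s, ∏ i : Fin l, (1:ℝ)/(2*(k.1 i : ℝ)-1)^2
      = ∑ g ∈ s.image Subtype.val, ∏ i : Fin l, (1:ℝ)/(2*(g i : ℝ)-1)^2 := by
        rw [Finset.sum_image (fun a _ b _ h => Subtype.val_injective h)]
    _ ≤ ∑ g ∈ Fintype.piFinset (fun _ : Fin l => Finset.Icc (n+1) N),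
          ∏ i : Fin l, (1:ℝ)/(2*(g i : ℝ)-1)^2 := by
        apply Finset.sum_le_sum_of_subset_of_nonneg hsub
        intro g _ _
        exact Finset.prod_nonneg (fun i _ => by positivity)
    _ = ∏ _i : Fin l, ∑ k ∈ Finset.Icc (n+1) N, (1:ℝ)/(2*(k:ℝ)-1)^2 := by
        rw [Finset.prod_univ_sum]
    _ = (∑ k ∈ Finset.Icc (n+1) N, (1:ℝ)/(2*(k:ℝ)-1)^2)^l := by
        rw [Finset.prod_const, Finset.card_univ, Fintype.card_fin]
    _ ≤ (1/(4*(n:ℝ)))^l := by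
        apply pow_le_pow_left₀ (Finset.sum_nonneg (fun k _ => by positivity)) (inner_le n N hn)

theorem sum_tTail_lt (n : ℕ) (hn : 0 < n) :
    ∑' l : ℕ, tTail n (l + 1) < 1 / (4 * (n : ℝ) - 3) := by
  have hn1 : (1:ℝ) ≤ n := by exact_mod_cast hn
  set r : ℝ := 1/(4*(n:ℝ)) with hr
  have hr0 : 0 ≤ r := by positivity
  have hr1 : r < 1 := by
    rw [hr, div_lt_one (by linarith)]; linarith
  have hgeom : Summable (fun l : ℕ => r^(l+1)) := by
    have := (summable_geometric_of_lt_one hr0 hr1).mul_left r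
    simpa [pow_succ, mul_comm] using this
  have hb : ∀ l : ℕ, tTail n (l+1) ≤ r^(l+1) := fun l => tTail_le n hn (l+1)
  have hnn : ∀ l : ℕ, 0 ≤ tTail n (l+1) := by
    intro l
    apply tsum_nonneg
    intro k
    exact Finset.prod_nonneg (fun i _ => by positivity)
  have hsum : Summable (fun l : ℕ => tTail n (l+1)) :=
    Summable.of_nonneg_of_le hnn hb hgeom
  calc ∑' l : ℕ, tTail n (l+1) ≤ ∑' l : ℕ, r^(l+1) := Summable.tsum_le_tsum hb hsum hgeom
    _ = r * (1-r)⁻¹ := by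
        have : ∀ l : ℕ, r^(l+1) = r * r^l := fun l => by rw [pow_succ]; ring
        simp_rw [this]
        rw [tsum_mul_left, tsum_geometric_of_lt_one hr0 hr1]
    _ < 1 / (4 * (n : ℝ) - 3) := by
        rw [hr]
        have h1 : (0:ℝ) < 4*(n:ℝ) - 3 := by linarith
        have h2 : (0:ℝ) < 4*(n:ℝ) := by linarith
        have h3 : (1:ℝ) - 1/(4*(n:ℝ)) = (4*(n:ℝ)-1)/(4*(n:ℝ)) := by field_simp
        rw [h3, inv_div, div_mul_div_comm, one_mul,
          div_lt_div_iff₀ (by nlinarith) h1]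
        nlinarith
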